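/- Let g be a finite-dimensional Lie algebra over a field of characteristic zero equipped with a nondegenerate invariant symmetric bilinear form B, and let (e, h, f) be an sl2-triple in g. Then the bilinear form on the (−1)-eigenspace g(−1) of ad h defined by ⟨x, y⟩ = B(e, [x, y]) is skew-symmetric and nondegenerate. -/

import Mathlib

/-!
By invariance `B e ⁅x, y⁆ = B ⁅e, x⁆ y`, and `⁅e, x⁆` has `ad h`-weight `1`. As `ad h` is skew for
`B`, the `1`-eigenspace is `B`-orthogonal to the range of `ad h + 1`. Since `ad h` has no Jordan
block at `-1`, `g = g(-1) ⊕ range (ad h + 1)`; so if `x` lies in the radical of the form, then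
`⁅e, x⁆` is orthogonal to all of `g`, hence zero, and `x` is a primitive vector of weight `-1`,
which does not exist.

That `h` has no Jordan blocks holds in any finite-dimensional `sl₂`-module in characteristic zero.
Pushing a Jordan chain up along `e` gives a primitive `u` of weight `n` with `h w = n w + u`; then
`w` can be moved into `ker e`, and at the end `m` of the `f`-string of `w` the identity
`e f^(m+1) w = (m + 1) ((n - m) f^m w + f^m u)` forces `m = n` and `f^n u = 0`, which is impossible.
-/

open LieModule

namespace LieModule

variable {R L M : Type*} [CommRing R] [LieRing L] [LieAlgebra R L]
  [AddCommGroup M] [Module R M] [LieRingModule L M] [LieModule R L M]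
  {x y : L} {c : R}

theorem lie_toEnd_pow_apply_of_lie_eq_smul (hxy : ⁅x, y⁆ = c • y) (j : ℕ) (m : M) :
    ⁅x, (toEnd R L M y ^ j) m⁆ = (toEnd R L M y ^ j) ⁅x, m⁆ + (j * c) • (toEnd R L M y ^ j) m := by
  induction j with
  | zero => simp
  | succ j ih =>
    simp only [pow_succ', Module.End.mul_apply, toEnd_apply_apply]
    rw [leibniz_lie, hxy, ih, smul_lie, lie_add, lie_smul]
    push_cast
    module

variable [IsDomain R] [CharZero R] [IsNoetherian R M] [Module.IsTorsionFree R M]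

theorem exists_toEnd_pow_apply_eq_zero_of_lie_eq_smul (hc : c ≠ 0) (hxy : ⁅x, y⁆ = c • y)
    {m : M} {μ : R} (hm : ⁅x, m⁆ = μ • m) : ∃ j, (toEnd R L M y ^ j) m = 0 := by
  by_contra! H
  have hinj : Function.Injective fun j : ℕ ↦ μ + j * c := fun a b hab ↦ by
    simpa [hc] using hab
  have := (toEnd R L M x).eigenvectors_linearIndependent' _ hinj (fun j ↦ (toEnd R L M y ^ j) m)
    fun j ↦ ⟨by simp [lie_toEnd_pow_apply_of_lie_eq_smul hxy, hm, add_smul], H j⟩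
  have := this.finite_of_isNoetherian
  exact not_finite ℕ

theorem exists_toEnd_pow_apply_eq_zero_of_lie_eq_smul_add (hc : c ≠ 0) (hxy : ⁅x, y⁆ = c • y)
    {u w : M} {μ : R} (hu : ⁅x, u⁆ = μ • u) (hw : ⁅x, w⁆ = μ • w + u) :
    ∃ j, (toEnd R L M y ^ j) w = 0 := by
  obtain ⟨i, hi⟩ := exists_toEnd_pow_apply_eq_zero_of_lie_eq_smul hc hxy hu
  have hyw : ⁅x, (toEnd R L M y ^ i) w⁆ = (μ + i * c) • (toEnd R L M y ^ i) w := by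
    rw [lie_toEnd_pow_apply_of_lie_eq_smul hxy, hw, map_add, hi, map_smul]
    module
  obtain ⟨j, hj⟩ := exists_toEnd_pow_apply_eq_zero_of_lie_eq_smul hc hxy hyw
  exact ⟨j + i, by rwa [pow_add, Module.End.mul_apply]⟩

end LieModule

namespace IsSl2Triple

open Finset

section CommRing

variable {R L M : Type*} [CommRing R] [LieRing L] [LieAlgebra R L]
  [AddCommGroup M] [Module R M] [LieRingModule L M] [LieModule R L M]
  {h e f : L} {t : IsSl2Triple h e f} {u w : M} {μ : R}

theorem lie_h_pow_toEnd_f_of_lie_h_eq_smul_add (t : IsSl2Triple h e f)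
    (hw : ⁅h, w⁆ = μ • w + u) (m : ℕ) :
    ⁅h, (toEnd R L M f ^ m) w⁆ = (μ - 2 * m) • (toEnd R L M f ^ m) w + (toEnd R L M f ^ m) u := by
  rw [lie_toEnd_pow_apply_of_lie_eq_smul (c := -2) (by rw [t.lie_lie_smul_f R, neg_smul]), hw,
    map_add, map_smul]
  module

theorem lie_e_pow_succ_toEnd_f_of_lie_h_eq_smul_add (t : IsSl2Triple h e f)
    (hw : ⁅h, w⁆ = μ • w + u) (hew : ⁅e, w⁆ = 0) (m : ℕ) :
    ⁅e, (toEnd R L M f ^ (m + 1)) w⁆ =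
      ((m : R) + 1) • ((μ - m) • (toEnd R L M f ^ m) w + (toEnd R L M f ^ m) u) := by
  have hf (z : M) (m : ℕ) : ⁅f, (toEnd R L M f ^ m) z⁆ = (toEnd R L M f ^ (m + 1)) z := by
    simp [pow_succ']
  induction m with
  | zero => simp [leibniz_lie e f w, t.lie_e_f, hw, hew]
  | succ m ih =>
    rw [← hf, leibniz_lie, t.lie_e_f, t.lie_h_pow_toEnd_f_of_lie_h_eq_smul_add hw, ih, lie_smul,
      lie_add, lie_smul, hf, hf]
    push_cast
    module

theorem HasPrimitiveVectorWith.pow_toEnd_e_pow_toEnd_f (P : t.HasPrimitiveVectorWith u μ)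
    (j : ℕ) :
    (toEnd R L M e ^ j) ((toEnd R L M f ^ j) u) = (∏ i ∈ range j, ((i + 1) * (μ - i))) • u := by
  induction j with
  | zero => simp
  | succ j ih =>
    rw [pow_succ, Module.End.mul_apply, toEnd_apply_apply, P.lie_e_pow_succ_toEnd_f, map_smul, ih,
      smul_smul, prod_range_succ, mul_comm]

end CommRing

section Field

variable {K L M : Type*} [Field K] [CharZero K] [LieRing L] [LieAlgebra K L]
  [AddCommGroup M] [Module K M] [LieRingModule L M] [LieModule K L M] [FiniteDimensional K M]
  {h e f : L} {t : IsSl2Triple h e f} {u w : M} {μ : K}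

namespace HasPrimitiveVectorWith

theorem lie_h_ne_smul_add_of_lie_e_eq_zero (P : t.HasPrimitiveVectorWith u μ)
    (hew : ⁅e, w⁆ = 0) : ⁅h, w⁆ ≠ μ • w + u := by
  intro hw
  have hw0 : ¬ (toEnd K L M f ^ 0) w = 0 := by
    rw [pow_zero, Module.End.one_apply]
    rintro rfl
    exact P.ne_zero (by simpa using hw.symm)
  obtain ⟨m, hm, hm_succ⟩ := Nat.exists_not_and_succ_of_not_zero_of_exists hw0 <|
    exists_toEnd_pow_apply_eq_zero_of_lie_eq_smul_add (c := -2) (by norm_num)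
      (by rw [t.lie_lie_smul_f K, neg_smul]) P.lie_h hw
  set X := (μ - m) • (toEnd K L M f ^ m) w + (toEnd K L M f ^ m) u
  have hX : X = 0 := by
    have := t.lie_e_pow_succ_toEnd_f_of_lie_h_eq_smul_add hw hew m
    rw [hm_succ, lie_zero, eq_comm, smul_eq_zero] at this
    exact this.resolve_left (Nat.cast_add_one_ne_zero m)
  have hu_m : (μ - m) • (toEnd K L M f ^ m) u = 0 := by
    have := congr_arg (⁅h, ·⁆) hX
    simp only [X, lie_add, lie_smul, t.lie_h_pow_toEnd_f_of_lie_h_eq_smul_add hw,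
      P.lie_h_pow_toEnd_f, lie_zero] at this
    linear_combination (norm := module) this - (μ - 2 * m) • hX
  rcases eq_or_ne μ m with hμ | hμ
  · exact P.pow_toEnd_f_ne_zero_of_eq_nat hμ le_rfl (by simpa [X, hμ] using hX)
  · rw [smul_eq_zero, sub_eq_zero, or_iff_right hμ] at hu_m
    exact hm (by simpa [X, hu_m, sub_eq_zero, hμ] using hX)

-- Induction on the height `j` of the `e`-string of `w`: its top vector `p` is primitive, and
-- subtracting a suitable multiple of `f ^ j p` (a weight-`n` vector) shortens the string.
theorem exists_lie_e_eq_zero_of_lie_h_eq_smul_add {n : ℕ}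
    (P : t.HasPrimitiveVectorWith u (n : K)) (hw : ⁅h, w⁆ = (n : K) • w + u) :
    ∃ w' : M, ⁅h, w'⁆ = (n : K) • w' + u ∧ ⁅e, w'⁆ = 0 := by
  have he := t.lie_h_e_smul K
  obtain ⟨j, hj⟩ := exists_toEnd_pow_apply_eq_zero_of_lie_eq_smul_add two_ne_zero he P.lie_h hw
  induction j generalizing w with
  | zero => exact ⟨w, hw, by simp_all⟩
  | succ j ih =>
    obtain _ | j := j
    · exact ⟨w, hw, by simpa using hj⟩
    set p := (toEnd K L M e ^ (j + 1)) w
    have heu : (toEnd K L M e ^ (j + 1)) u = 0 := by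
      rw [pow_succ, Module.End.mul_apply, toEnd_apply_apply, P.lie_e, map_zero]
    have hp : ⁅h, p⁆ = ((n : K) + 2 * (j + 1 : ℕ)) • p := by
      rw [lie_toEnd_pow_apply_of_lie_eq_smul he, hw, map_add, map_smul, heu, add_zero]
      module
    have hep : ⁅e, p⁆ = 0 := by rwa [← toEnd_apply_apply K, ← Module.End.mul_apply, ← pow_succ']
    rcases eq_or_ne p 0 with hp0 | hp0
    · exact ih hw hp0
    have P' : t.HasPrimitiveVectorWith p _ := ⟨hp0, hp, hep⟩
    set a : K := ∏ i ∈ range (j + 1), ((i + 1) * ((n : K) + 2 * (j + 1 : ℕ) - i))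
    have ha : a ≠ 0 := prod_ne_zero_iff.mpr fun i hi ↦ by
      refine mul_ne_zero (Nat.cast_add_one_ne_zero i) fun hi' ↦ ?_
      have : ((n + 2 * (j + 1) : ℕ) : K) = i := by push_cast at hi' ⊢; linear_combination hi'
      rw [Nat.cast_inj] at this
      rw [mem_range] at hi
      omega
    set c := a⁻¹ • (toEnd K L M f ^ (j + 1)) p
    have hc : ⁅h, c⁆ = (n : K) • c := by
      rw [lie_smul, P'.lie_h_pow_toEnd_f, smul_comm]
      congr 2
      ring
    have hec : (toEnd K L M e ^ (j + 1)) c = p := by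
      rw [map_smul, P'.pow_toEnd_e_pow_toEnd_f, inv_smul_smul₀ ha]
    exact ih (w := w - c) (by rw [lie_sub, hw, hc]; module) (by rw [map_sub, hec, sub_self])

end HasPrimitiveVectorWith

-- Push `u` to the top of its `e`-string, where it becomes primitive.
theorem eq_zero_of_lie_h_eq_smul_add (t : IsSl2Triple h e f) (hu : ⁅h, u⁆ = μ • u)
    (hw : ⁅h, w⁆ = μ • w + u) : u = 0 := by
  by_contra hu0
  have he := t.lie_h_e_smul K
  obtain ⟨N, hN, hN_succ⟩ := Nat.exists_not_and_succ_of_not_zero_of_exists (by simpa using hu0)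
    (exists_toEnd_pow_apply_eq_zero_of_lie_eq_smul two_ne_zero he hu)
  have P : t.HasPrimitiveVectorWith ((toEnd K L M e ^ N) u) (μ + 2 * N) :=
    ⟨hN, t.lie_h_pow_toEnd_e hu N, by rwa [lie_e_pow_toEnd_e]⟩
  obtain ⟨n, hn⟩ := P.exists_nat
  rw [hn] at P
  have hNw : ⁅h, (toEnd K L M e ^ N) w⁆ =
      (n : K) • (toEnd K L M e ^ N) w + (toEnd K L M e ^ N) u := by
    rw [lie_toEnd_pow_apply_of_lie_eq_smul he, hw, map_add, map_smul, ← hn]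
    module
  obtain ⟨w', hw', hew'⟩ := P.exists_lie_e_eq_zero_of_lie_h_eq_smul_add hNw
  exact P.lie_h_ne_smul_add_of_lie_e_eq_zero hew' hw'

theorem isCompl_eigenspace_range_toEnd_h_sub (t : IsSl2Triple h e f) (μ : K) :
    IsCompl ((toEnd K L M h).eigenspace μ) (LinearMap.range (toEnd K L M h - μ • 1)) := by
  rw [Module.End.eigenspace_def, Submodule.isCompl_iff_disjoint _ _
    (by rw [add_comm, LinearMap.finrank_range_add_finrank_ker])]
  refine Submodule.disjoint_def.mpr fun u hu ⟨w, hw⟩ ↦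
    t.eq_zero_of_lie_h_eq_smul_add (K := K) (μ := μ) (w := w) ?_ ?_
  · simpa [sub_eq_zero] using hu
  · simp [← hw]

end Field

end IsSl2Triple

theorem IsSl2Triple.of_lie_eq_smul {K L : Type*} [Field K] [CharZero K] [LieRing L]
    [LieAlgebra K L] {h e f : L} (hhe : ⁅h, e⁆ = (2 : K) • e) (hhf : ⁅h, f⁆ = (-2 : K) • f)
    (hef : ⁅e, f⁆ = h) (hne : e ≠ 0) : IsSl2Triple h e f where
  h_ne_zero := by
    rintro rfl
    simp [eq_comm, hne] at hhe
  lie_e_f := hef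
  lie_h_e_nsmul := by rw [hhe, ofNat_smul_eq_nsmul]
  lie_h_f_nsmul := by rw [hhf, neg_smul, ofNat_smul_eq_nsmul]

theorem LieAlgebra.range_ad_sub_neg_smul_le_ker_of_lie_eq_smul {K L : Type*} [CommRing K]
    [LieRing L] [LieAlgebra K L] {B : L →ₗ[K] L →ₗ[K] K}
    (hinv : ∀ x y z : L, B ⁅x, y⁆ z = B x ⁅y, z⁆)
    {x u : L} {μ : K} (hu : ⁅x, u⁆ = μ • u) :
    LinearMap.range (LieAlgebra.ad K L x - (-μ) • 1) ≤ LinearMap.ker (B u) := by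
  rintro _ ⟨y, rfl⟩
  simp [← hinv, ← lie_skew u x, hu]

theorem skew_form_on_minus_one_eigenspace_general
    (k g : Type*) [Field k] [CharZero k] [LieRing g] [LieAlgebra k g]
    [FiniteDimensional k g]
    (B : g →ₗ[k] g →ₗ[k] k)
    (hinv : ∀ x y z : g, B ⁅x, y⁆ z = B x ⁅y, z⁆)
    (hnondeg : ∀ x : g, (∀ y : g, B x y = 0) → x = 0)
    (e h f : g)
    (hhe : ⁅h, e⁆ = (2 : k) • e) (hhf : ⁅h, f⁆ = (-2 : k) • f)
    (hef : ⁅e, f⁆ = h) (hne : e ≠ 0) :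
    (∀ x y : Module.End.eigenspace ((LieAlgebra.ad k g) h) (-1 : k),
        B e ⁅(x : g), (y : g)⁆ = - B e ⁅(y : g), (x : g)⁆) ∧
      (∀ x : Module.End.eigenspace ((LieAlgebra.ad k g) h) (-1 : k),
        (∀ y : Module.End.eigenspace ((LieAlgebra.ad k g) h) (-1 : k),
          B e ⁅(x : g), (y : g)⁆ = 0) → x = 0) := by
  have t := IsSl2Triple.of_lie_eq_smul hhe hhf hef hne
  refine ⟨fun x y ↦ by rw [← lie_skew, map_neg], fun ⟨x, hx⟩ hB ↦ ?_⟩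
  have hxh : ⁅h, x⁆ = (-1 : k) • x := Module.End.mem_eigenspace_iff.mp hx
  have hex : ⁅e, x⁆ = 0 := by
    refine hnondeg _ fun z ↦ ?_
    have hz : z ∈ (LieAlgebra.ad k g h).eigenspace (-1) ⊔
        LinearMap.range (LieAlgebra.ad k g h - (-1 : k) • 1) :=
      (t.isCompl_eigenspace_range_toEnd_h_sub (M := g) (-1 : k)).sup_eq_top ▸ Submodule.mem_top
    refine sup_le (fun y hy ↦ ?_)
      (LieAlgebra.range_ad_sub_neg_smul_le_ker_of_lie_eq_smul hinv ?_) hz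
    · rw [LinearMap.mem_ker, hinv]
      exact hB ⟨y, hy⟩
    · simpa [show (-1 + 2 : k) = 1 by norm_num] using t.lie_h_pow_toEnd_e hxh 1
  by_contra hx0
  obtain ⟨n, hn⟩ := (⟨fun hx' ↦ hx0 (Subtype.ext hx'), hxh, hex⟩ :
    t.HasPrimitiveVectorWith x (-1 : k)).exists_nat
  exact Nat.cast_add_one_ne_zero (R := k) n (by rw [← hn]; ring)

/-- Let `g` be a finite-dimensional Lie algebra over a field of characteristic zero with a
nondegenerate invariant symmetric bilinear form `B`, and let `(e, h, f)` be an
`sl₂`-triple. Then the bilinear form `⟨x, y⟩ = B(e, [x, y])` on the `(−1)`-eigenspace of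
`ad h` is skew-symmetric and nondegenerate. -/
theorem skew_form_on_minus_one_eigenspace
    (k g : Type*) [Field k] [CharZero k] [LieRing g] [LieAlgebra k g]
    [FiniteDimensional k g]
    (B : g →ₗ[k] g →ₗ[k] k)
    (hsymm : ∀ x y : g, B x y = B y x)
    (hinv : ∀ x y z : g, B ⁅x, y⁆ z = B x ⁅y, z⁆)
    (hnondeg : ∀ x : g, (∀ y : g, B x y = 0) → x = 0)
    (e h f : g)
    (hhe : ⁅h, e⁆ = (2 : k) • e) (hhf : ⁅h, f⁆ = (-2 : k) • f)
    (hef : ⁅e, f⁆ = h) (hne : e ≠ 0) :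
    (∀ x y : Module.End.eigenspace ((LieAlgebra.ad k g) h) (-1 : k),
        B e ⁅(x : g), (y : g)⁆ = - B e ⁅(y : g), (x : g)⁆) ∧
      (∀ x : Module.End.eigenspace ((LieAlgebra.ad k g) h) (-1 : k),
        (∀ y : Module.End.eigenspace ((LieAlgebra.ad k g) h) (-1 : k),
          B e ⁅(x : g), (y : g)⁆ = 0) → x = 0) :=
  skew_form_on_minus_one_eigenspace_general k g B hinv hnondeg e h f hhe hhf hef hne
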